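/- arXiv:2605.01658 — 3 statements merged into one kernel-verified Lean document; each statement's English description precedes it below -/
import Mathlib

section
/- With the notation of the previous statement, the solution Y of the Volterra equation satisfies ‖Y(x) − I‖ ≤ C (∫_x^∞ |q(s)| ds) · exp(C ∫_x^∞ |q(s)| ds) for all x ∈ ℝ. -/
open scoped Matrix.Norms.L2Operator ComplexConjugate
open MeasureTheory

/-!
Conjugation by the unitaries `E` and `σ₃` preserves the operator norm, so `‖Q̃(s)‖ = |q(s)|`.
Put `v(τ) = ∫_τ^∞ ‖Q̃ Y‖` and `G(τ) = ∫_τ^∞ |q|`. The equation gives `‖Y(τ) - 1‖ ≤ v(τ)`, hence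
`‖Q̃ Y‖ ≤ |q| (1 + v)`, and as `v` is antitone, `v(τ) - v(t) ≤ (1 + v(τ)) (G(τ) - G(t))` for
`τ ≤ t`. Cutting `[x, ∞)` where `G` has dropped by `1/2` (possible since `G` is continuous and
tends to `0`), `1 + v` at most doubles on each piece, so
`1 + v(x) ≤ 2^(⌊2 G(x)⌋ + 1) ≤ 2 e^{2 G(x)}`, and `‖Y(x) - 1‖ ≤ v(x) ≤ (1 + v(x)) G(x)` gives the
bound with `C = 2`. Working with `v` instead of `‖Y‖` needs no measurability of `Y`.
-/

open Filter Topology Set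

theorem le_two_pow_of_le_add_mul_sub {G W : ℝ → ℝ} {x : ℝ} (hG : ContinuousOn G (Ici x))
    (hG_lim : Tendsto G atTop (𝓝 0)) (hW : ∀ τ, x ≤ τ → 0 ≤ W τ)
    (htail : ∀ τ, x ≤ τ → W τ ≤ 1 + W τ * G τ)
    (hstep : ∀ τ t, x ≤ τ → τ ≤ t → W τ ≤ W t + W τ * (G τ - G t)) (n : ℕ) :
    ∀ τ, x ≤ τ → G τ ≤ (n + 1) / 2 → W τ ≤ 2 ^ (n + 1) := by
  induction n with
  | zero =>
    intro τ hτ hGτ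
    norm_num at hGτ ⊢
    nlinarith [htail τ hτ, hW τ hτ]
  | succ n ih =>
    intro τ hτ hGτ
    by_cases hsmall : G τ ≤ (n + 1) / 2
    · calc W τ ≤ 2 ^ (n + 1) := ih τ hτ hsmall
        _ ≤ 2 ^ (n + 1 + 1) := pow_le_pow_right₀ one_le_two n.succ.le_succ
    push Not at hsmall
    have hlevel : (0 : ℝ) < (n + 1) / 2 := by positivity
    obtain ⟨T, hGT, hτT⟩ :=
      ((hG_lim.eventually_lt_const hlevel).and (eventually_ge_atTop τ)).exists
    obtain ⟨t, ⟨hτt, -⟩, hGt⟩ := intermediate_value_Icc' hτT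
      (hG.mono fun s hs => hτ.trans hs.1) ⟨hGT.le, hsmall.le⟩
    have hWt := ih t (hτ.trans hτt) hGt.le
    push_cast at hGτ
    rw [pow_succ]
    nlinarith [hstep τ t hτ hτt, hW τ hτ]

theorem le_two_mul_exp_of_le_add_mul_sub {G W : ℝ → ℝ} {x : ℝ} (hG : ContinuousOn G (Ici x))
    (hG_lim : Tendsto G atTop (𝓝 0)) (hW : ∀ τ, x ≤ τ → 0 ≤ W τ)
    (htail : ∀ τ, x ≤ τ → W τ ≤ 1 + W τ * G τ)
    (hstep : ∀ τ t, x ≤ τ → τ ≤ t → W τ ≤ W t + W τ * (G τ - G t)) (hGx : 0 ≤ G x) :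
    W x ≤ 2 * Real.exp (2 * G x) := by
  set m := ⌊2 * G x⌋₊
  have hWx := le_two_pow_of_le_add_mul_sub hG hG_lim hW htail hstep m x le_rfl
    (by linarith [Nat.lt_floor_add_one (2 * G x)])
  calc W x ≤ 2 ^ (m + 1) := hWx
    _ = 2 * 2 ^ m := by ring
    _ ≤ 2 * Real.exp 1 ^ m := by gcongr; linarith [Real.add_one_le_exp 1]
    _ = 2 * Real.exp m := by rw [Real.exp_one_pow]
    _ ≤ 2 * Real.exp (2 * G x) := by gcongr; exact Nat.floor_le (by positivity)

section Volterra

variable {A : Type*} [NormedRing A] [NormedSpace ℝ A]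
  {P Y : ℝ → A} {k : ℝ → ℝ} {x : ℝ}

theorem norm_sub_one_le_integral_norm_mul (hY : ∀ τ, x ≤ τ → Y τ = 1 - ∫ s in Ioi τ, P s * Y s)
    {τ : ℝ} (hτ : x ≤ τ) : ‖Y τ - 1‖ ≤ ∫ s in Ioi τ, ‖P s * Y s‖ := by
  rw [hY τ hτ, sub_sub_cancel_left, norm_neg]
  exact norm_integral_le_integral_norm _

theorem setIntegral_norm_mul_le_of_eq_one_sub_integral [NormOneClass A]
    (hk : IntegrableOn k (Ioi x)) (hPk : ∀ s, x < s → ‖P s‖ ≤ k s)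
    (hY : ∀ τ, x ≤ τ → Y τ = 1 - ∫ s in Ioi τ, P s * Y s)
    (hPY : IntegrableOn (fun s => P s * Y s) (Ioi x))
    ⦃τ : ℝ⦄ (hτ : x ≤ τ) ⦃S : Set ℝ⦄ (hS : S ⊆ Ioi τ) (hSm : MeasurableSet S) :
    ∫ s in S, ‖P s * Y s‖ ≤ (1 + ∫ s in Ioi τ, ‖P s * Y s‖) * ∫ s in S, k s := by
  have hSx : S ⊆ Ioi x := hS.trans (Ioi_subset_Ioi hτ)
  rw [← integral_const_mul]
  refine setIntegral_mono_on (hPY.mono_set hSx).norm ((hk.mono_set hSx).const_mul _) hSm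
    fun s hs => ?_
  have hk_nonneg : 0 ≤ k s := (norm_nonneg _).trans (hPk s (hSx hs))
  have hv_anti : ∫ r in Ioi s, ‖P r * Y r‖ ≤ ∫ r in Ioi τ, ‖P r * Y r‖ :=
    setIntegral_mono_set (hPY.mono_set (Ioi_subset_Ioi hτ)).norm
      (ae_of_all _ fun _ => norm_nonneg _) (Ioi_subset_Ioi (hS hs).le).eventuallyLE
  calc ‖P s * Y s‖ ≤ ‖P s‖ * ‖Y s‖ := norm_mul_le _ _
    _ ≤ k s * (1 + ∫ r in Ioi τ, ‖P r * Y r‖) := by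
      refine mul_le_mul (hPk s (hSx hs)) ?_ (norm_nonneg _) hk_nonneg
      calc ‖Y s‖ ≤ ‖(1 : A)‖ + ‖Y s - 1‖ := norm_le_norm_add_norm_sub' _ _
        _ ≤ 1 + ∫ r in Ioi τ, ‖P r * Y r‖ := by
          rw [norm_one]
          linarith [norm_sub_one_le_integral_norm_mul hY (hSx hs).le]
    _ = (1 + ∫ r in Ioi τ, ‖P r * Y r‖) * k s := mul_comm _ _

theorem norm_sub_one_le_of_eq_one_sub_integral [NormOneClass A] (hk : IntegrableOn k (Ioi x))
    (hPk : ∀ s, x < s → ‖P s‖ ≤ k s) (hY : ∀ τ, x ≤ τ → Y τ = 1 - ∫ s in Ioi τ, P s * Y s) :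
    ‖Y x - 1‖ ≤ 2 * (∫ s in Ioi x, k s) * Real.exp (2 * ∫ s in Ioi x, k s) := by
  set G : ℝ → ℝ := fun τ => ∫ s in Ioi τ, k s
  have hGx : 0 ≤ G x :=
    setIntegral_nonneg measurableSet_Ioi fun s hs => (norm_nonneg _).trans (hPk s hs)
  by_cases hPY : IntegrableOn (fun s => P s * Y s) (Ioi x)
  case neg =>
    -- the integral then takes the junk value `0`, so `Y x = 1`
    rw [hY x le_rfl, integral_undef hPY, sub_zero, sub_self, norm_zero]
    positivity
  set v : ℝ → ℝ := fun τ => ∫ s in Ioi τ, ‖P s * Y s‖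
  have hPY_le := setIntegral_norm_mul_le_of_eq_one_sub_integral hk hPk hY hPY
  have hstep : ∀ τ t, x ≤ τ → τ ≤ t → 1 + v τ ≤ 1 + v t + (1 + v τ) * (G τ - G t) := by
    intro τ t hτ hτt
    have hv : v τ - v t = ∫ s in Ioc τ t, ‖P s * Y s‖ := by
      rw [← intervalIntegral.integral_of_le hτt]
      exact intervalIntegral.integral_Ioi_sub_Ioi (hPY.mono_set (Ioi_subset_Ioi hτ)).norm hτt
    have hG : G τ - G t = ∫ s in Ioc τ t, k s := by
      rw [← intervalIntegral.integral_of_le hτt]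
      exact intervalIntegral.integral_Ioi_sub_Ioi (hk.mono_set (Ioi_subset_Ioi hτ)) hτt
    rw [hG]
    linarith [hPY_le hτ (S := Ioc τ t) Ioc_subset_Ioi_self measurableSet_Ioc]
  have hW : 1 + v x ≤ 2 * Real.exp (2 * G x) :=
    le_two_mul_exp_of_le_add_mul_sub hk.continuousOn_Ici_primitive_Ioi
      (tendsto_integral_Ioi_zero tendsto_id) (fun τ hτ => by positivity)
      (fun τ hτ => by linarith [hPY_le hτ subset_rfl measurableSet_Ioi]) hstep hGx
  calc ‖Y x - 1‖ ≤ v x := norm_sub_one_le_integral_norm_mul hY le_rfl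
    _ ≤ (1 + v x) * G x := hPY_le le_rfl subset_rfl measurableSet_Ioi
    _ ≤ 2 * Real.exp (2 * G x) * G x := by gcongr
    _ = 2 * G x * Real.exp (2 * G x) := by ring

end Volterra

section PauliMatrices

open Complex

theorem diag_fin_two_mem_unitary {a b : ℂ} (ha : ‖a‖ = 1) (hb : ‖b‖ = 1) :
    (!![a, 0; 0, b] : Matrix (Fin 2) (Fin 2) ℂ) ∈ unitary (Matrix (Fin 2) (Fin 2) ℂ) := by
  refine Matrix.mem_unitaryGroup_iff.mpr ?_
  ext i j
  fin_cases i <;> fin_cases j <;>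
    simp [Matrix.mul_apply, mul_conj, normSq_eq_norm_sq, ha, hb]

theorem norm_inv_mul_mul_mul_of_mem_unitary {n : Type*} [Fintype n] [DecidableEq n]
    {U V : Matrix n n ℂ} (A : Matrix n n ℂ) (hU : U ∈ unitary (Matrix n n ℂ))
    (hV : V ∈ unitary (Matrix n n ℂ)) : ‖U⁻¹ * V * A * U‖ = ‖A‖ := by
  rw [Matrix.inv_eq_left_inv (Unitary.star_mul_self_of_mem hU),
    CStarRing.norm_mul_mem_unitary _ hU, mul_assoc,
    CStarRing.norm_mem_unitary_mul _ (Unitary.star_mem hU), CStarRing.norm_mem_unitary_mul _ hV]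

theorem norm_smul_sub_smul_conj (a : ℂ) :
    ‖a • (!![0, 0; 1, 0] : Matrix (Fin 2) (Fin 2) ℂ) - conj a • !![0, 1; 0, 0]‖ = ‖a‖ := by
  set M := a • (!![0, 0; 1, 0] : Matrix (Fin 2) (Fin 2) ℂ) - conj a • !![0, 1; 0, 0]
  have hM : star M * M = ((‖a‖ ^ 2 : ℝ) : ℂ) • 1 := by
    ext i j
    fin_cases i <;> fin_cases j <;>
      simp [M, Matrix.mul_apply, conj_mul']
  have h := CStarRing.norm_star_mul_self (x := M)
  rw [hM, norm_smul, norm_one, mul_one, norm_real, Real.norm_of_nonneg (by positivity)] at h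
  nlinarith [norm_nonneg M, norm_nonneg a]

end PauliMatrices

/-- Bound for the solution of the backward Volterra equation
`Y(x) = I − ∫_x^∞ Q̃(s) Y(s) ds`: closeness to the identity. Here `Q̃ = −i E⁻¹ σ₃ Q E` and
`Q = −i (q σ₋ − conj(q) σ₊)`, with an absolute constant `C`. -/
theorem stmt9 :
    ∃ C : ℝ, 0 < C ∧
      ∀ (q : ℝ → ℂ), Integrable q →
        ∀ (ξ : ℝ) (E Q Qt Y : ℝ → Matrix (Fin 2) (Fin 2) ℂ),
          (∀ x : ℝ, E x = !![Complex.exp (-(Complex.I) * ξ * x / 2), 0;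
                             0, Complex.exp (Complex.I * ξ * x / 2)]) →
          (∀ x : ℝ, Q x = (-Complex.I) •
              (q x • (!![0, 0; 1, 0] : Matrix (Fin 2) (Fin 2) ℂ)
               - conj (q x) • (!![0, 1; 0, 0] : Matrix (Fin 2) (Fin 2) ℂ))) →
          (∀ x : ℝ, Qt x = (-Complex.I) •
              ((E x)⁻¹ * (!![1, 0; 0, -1] : Matrix (Fin 2) (Fin 2) ℂ) * Q x * E x)) →
          (∀ x : ℝ, Y x = 1 - ∫ s in Set.Ioi x, Qt s * Y s) →
          ∀ x : ℝ, ‖Y x - 1‖ ≤ C * (∫ s in Set.Ioi x, ‖q s‖) * Real.exp (C * ∫ s in Set.Ioi x, ‖q s‖) := by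
  refine ⟨2, two_pos, fun q hq ξ E Q Qt Y hE hQ hQt hY x => ?_⟩
  have hE_unitary : ∀ s, E s ∈ unitary (Matrix (Fin 2) (Fin 2) ℂ) := fun s => by
    rw [hE s]
    exact diag_fin_two_mem_unitary (by simp [Complex.norm_exp]) (by simp [Complex.norm_exp])
  have hQt_norm : ∀ s, ‖Qt s‖ = ‖q s‖ := fun s => by
    rw [hQt s, norm_smul, norm_inv_mul_mul_mul_of_mem_unitary _ (hE_unitary s)
      (diag_fin_two_mem_unitary (by simp) (by simp)), hQ s, norm_smul, norm_smul_sub_smul_conj]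
    simp
  exact norm_sub_one_le_of_eq_one_sub_integral hq.norm.integrableOn
    (fun s _ => (hQt_norm s).le) (fun τ _ => hY τ)
end

section
/- Let f : ℝ → [0,∞) be a nonnegative function satisfying f(s) ≤ C_ℓ (1+|s|)^{−ℓ} for every ℓ ∈ ℕ (rapid decay), and let g_j(s) := Σ_{p=0}^{j} f(s − p). Then for every real x ≥ j + 1/2 and every y ∈ ℝ, | ∫_{s > j, |s−x| > 1} g_j(s) · (s−x)/((s−x)² + y²) ds | ≤ C for a constant C independent of j, x, y. -/
/-!
For `s > j` every translate `s - p` with `p ≤ j` splits as `(s - j) + (j - p)` with both parts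
nonnegative, and `(1 + a + b)⁻⁴ ≤ (1 + a)⁻² (1 + b)⁻²`. Summing over `p` gives the pointwise bound
`g_j(s) ≲ (1 + |s - j|)⁻²` uniformly in `j`. Since the kernel has absolute value at most `1` where
`|s - x| > 1`, the integral is bounded by `∫ (1 + |s - j|)⁻² ds = ∫ (1 + |t|)⁻² dt`.
-/

open MeasureTheory Set Finset

lemma abs_div_sq_add_sq_le_one {u : ℝ} (hu : 1 ≤ |u|) (v : ℝ) : |u / (u ^ 2 + v ^ 2)| ≤ 1 := by
  have hpos : 0 < u ^ 2 + v ^ 2 := by nlinarith [sq_abs u, sq_nonneg v]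
  rw [abs_div, abs_of_pos hpos, div_le_one hpos]
  nlinarith [sq_abs u, sq_nonneg v]

lemma one_add_add_rpow_neg_two_mul_le {a b r : ℝ} (ha : 0 ≤ a) (hb : 0 ≤ b) (hr : 0 ≤ r) :
    (1 + (a + b)) ^ (-(2 * r)) ≤ (1 + a) ^ (-r) * (1 + b) ^ (-r) := by
  have hprod : (1 + a) * (1 + b) ≤ (1 + (a + b)) ^ (2 : ℝ) := by
    rw [Real.rpow_two]; nlinarith [mul_nonneg ha hb]
  calc (1 + (a + b)) ^ (-(2 * r)) = ((1 + (a + b)) ^ (2 : ℝ)) ^ (-r) := by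
        rw [← Real.rpow_mul (by positivity)]; ring_nf
    _ ≤ ((1 + a) * (1 + b)) ^ (-r) :=
        Real.rpow_le_rpow_of_nonpos (by positivity) hprod (by linarith)
    _ = (1 + a) ^ (-r) * (1 + b) ^ (-r) := Real.mul_rpow (by positivity) (by positivity)

lemma summable_one_add_nat_rpow_neg {r : ℝ} (hr : 1 < r) :
    Summable fun k : ℕ => (1 + (k : ℝ)) ^ (-r) := by
  refine ((summable_nat_add_iff 1).2 (Real.summable_one_div_nat_rpow.2 hr)).congr fun k => ?_
  rw [one_div, ← Real.rpow_neg (by positivity)]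
  push_cast
  ring_nf

lemma sum_range_one_add_abs_sub_rpow_le {r : ℝ} (hr : 1 < r) {j : ℕ} {s : ℝ} (hs : (j : ℝ) ≤ s) :
    ∑ p ∈ range (j + 1), (1 + |s - p|) ^ (-(2 * r)) ≤
      (∑' k : ℕ, (1 + (k : ℝ)) ^ (-r)) * (1 + |s - j|) ^ (-r) := by
  have hsplit : ∀ p ∈ range (j + 1), (1 + |s - p|) ^ (-(2 * r)) ≤
      (1 + ((j - p : ℕ) : ℝ)) ^ (-r) * (1 + |s - j|) ^ (-r) := by
    intro p hp
    have hpj : p ≤ j := Nat.lt_succ_iff.mp (mem_range.mp hp)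
    have hpj' : (p : ℝ) ≤ j := by exact_mod_cast hpj
    have hjp : |s - p| = ((j - p : ℕ) : ℝ) + |s - j| := by
      rw [Nat.cast_sub hpj, abs_of_nonneg (by linarith), abs_of_nonneg (by linarith)]
      ring
    rw [hjp]
    exact one_add_add_rpow_neg_two_mul_le (Nat.cast_nonneg _) (abs_nonneg _) (by linarith)
  calc ∑ p ∈ range (j + 1), (1 + |s - p|) ^ (-(2 * r))
      ≤ ∑ p ∈ range (j + 1), (1 + ((j - p : ℕ) : ℝ)) ^ (-r) * (1 + |s - j|) ^ (-r) :=
        sum_le_sum hsplit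
    _ = (∑ k ∈ range (j + 1), (1 + (k : ℝ)) ^ (-r)) * (1 + |s - j|) ^ (-r) := by
        rw [← sum_mul, ← sum_range_reflect]
        exact congrArg (· * _) (sum_congr rfl fun k hk => by
          have := mem_range.mp hk
          congr 3
          omega)
    _ ≤ (∑' k : ℕ, (1 + (k : ℝ)) ^ (-r)) * (1 + |s - j|) ^ (-r) := by
        gcongr
        exact (summable_one_add_nat_rpow_neg hr).sum_le_tsum _ fun k _ => by positivity

lemma sum_range_translates_le {f : ℝ → ℝ} {C r : ℝ} (hf0 : ∀ s, 0 ≤ f s)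
    (hC : ∀ s, f s ≤ C * (1 + |s|) ^ (-(2 * r))) (hr : 1 < r) {j : ℕ} {s : ℝ}
    (hs : (j : ℝ) ≤ s) :
    ∑ p ∈ range (j + 1), f (s - p) ≤
      C * (∑' k : ℕ, (1 + (k : ℝ)) ^ (-r)) * (1 + |s - j|) ^ (-r) := by
  have hC0 : 0 ≤ C := by simpa using (hf0 0).trans (hC 0)
  calc ∑ p ∈ range (j + 1), f (s - p)
      ≤ ∑ p ∈ range (j + 1), C * (1 + |s - p|) ^ (-(2 * r)) := sum_le_sum fun p _ => hC _
    _ ≤ C * ((∑' k : ℕ, (1 + (k : ℝ)) ^ (-r)) * (1 + |s - j|) ^ (-r)) := by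
        rw [← mul_sum]
        exact mul_le_mul_of_nonneg_left (sum_range_one_add_abs_sub_rpow_le hr hs) hC0
    _ = _ := by ring

lemma integrable_one_add_abs_sub_rpow_neg {r : ℝ} (hr : 1 < r) (c : ℝ) :
    Integrable fun t : ℝ => (1 + |t - c|) ^ (-r) := by
  have h : Integrable fun t : ℝ => (1 + |t|) ^ (-r) := by
    simpa using integrable_one_add_norm (E := ℝ) (μ := volume) (r := r) (by simpa using hr)
  exact h.comp_sub_right c

theorem stmt14_general (f : ℝ → ℝ) (hf0 : ∀ s, 0 ≤ f s)
    (hdecay : ∀ ℓ : ℕ, ∃ Cℓ : ℝ, ∀ s : ℝ, f s ≤ Cℓ * (1 + |s|) ^ (-(ℓ : ℝ))) :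
    ∃ C : ℝ, ∀ (j : ℕ) (x y : ℝ), (j : ℝ) + 1 / 2 ≤ x →
      |∫ s in {s : ℝ | (j : ℝ) < s ∧ 1 < |s - x|},
          (∑ p ∈ Finset.range (j + 1), f (s - (p : ℝ))) *
            ((s - x) / ((s - x) ^ 2 + y ^ 2))| ≤ C := by
  obtain ⟨C, hC⟩ := hdecay 4
  have hC' : ∀ s, f s ≤ C * (1 + |s|) ^ (-(2 * 2 : ℝ)) := fun s => by
    simpa [show (2 * 2 : ℝ) = 4 by norm_num] using hC s
  set M := C * ∑' k : ℕ, (1 + (k : ℝ)) ^ (-(2 : ℝ))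
  have hM : 0 ≤ M :=
    mul_nonneg (by simpa using (hf0 0).trans (hC 0)) (tsum_nonneg fun k => by positivity)
  refine ⟨M * ∫ t : ℝ, (1 + |t|) ^ (-(2 : ℝ)), fun j x y _ => ?_⟩
  have hS : MeasurableSet {s : ℝ | (j : ℝ) < s ∧ 1 < |s - x|} :=
    measurableSet_Ioi.inter (measurableSet_lt measurable_const (measurable_id.sub_const x).abs)
  have hbound : ∀ s ∈ {s : ℝ | (j : ℝ) < s ∧ 1 < |s - x|},
      ‖(∑ p ∈ range (j + 1), f (s - p)) * ((s - x) / ((s - x) ^ 2 + y ^ 2))‖ ≤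
        M * (1 + |s - j|) ^ (-(2 : ℝ)) := by
    rintro s ⟨hjs, hxs⟩
    have hg0 : 0 ≤ ∑ p ∈ range (j + 1), f (s - p) := sum_nonneg fun p _ => hf0 _
    rw [Real.norm_eq_abs, abs_mul, abs_of_nonneg hg0]
    exact (mul_le_of_le_one_right hg0 (abs_div_sq_add_sq_le_one hxs.le y)).trans
      (sum_range_translates_le hf0 hC' one_lt_two hjs.le)
  have hint := (integrable_one_add_abs_sub_rpow_neg one_lt_two (j : ℝ)).const_mul M
  calc _ ≤ ∫ s in {s : ℝ | (j : ℝ) < s ∧ 1 < |s - x|}, M * (1 + |s - j|) ^ (-(2 : ℝ)) :=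
        norm_integral_le_of_norm_le hint.integrableOn (ae_restrict_of_forall_mem hS hbound)
    _ ≤ ∫ s : ℝ, M * (1 + |s - j|) ^ (-(2 : ℝ)) :=
        setIntegral_le_integral hint (ae_of_all _ fun s => by positivity)
    _ = M * ∫ t : ℝ, (1 + |t|) ^ (-(2 : ℝ)) := by
        rw [integral_const_mul, integral_sub_right_eq_self (fun t => (1 + |t|) ^ (-(2 : ℝ)))]

/-- Uniform bound for the far tail integral: for a nonnegative rapidly decaying `f`,
`g_j(s) = Σ_{p=0}^j f(s-p)`, and any `x ≥ j + 1/2`, `y ∈ ℝ`, the integral of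
`g_j(s) (s-x)/((s-x)²+y²)` over `{s > j, |s-x| > 1}` is bounded uniformly in `j, x, y`. -/
theorem stmt14 (f : ℝ → ℝ) (hmeas : Measurable f) (hf0 : ∀ s, 0 ≤ f s)
    (hdecay : ∀ ℓ : ℕ, ∃ Cℓ : ℝ, ∀ s : ℝ, f s ≤ Cℓ * (1 + |s|) ^ (-(ℓ : ℝ))) :
    ∃ C : ℝ, ∀ (j : ℕ) (x y : ℝ), (j : ℝ) + 1 / 2 ≤ x →
      |∫ s in {s : ℝ | (j : ℝ) < s ∧ 1 < |s - x|},
          (∑ p ∈ Finset.range (j + 1), f (s - (p : ℝ))) *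
            ((s - x) / ((s - x) ^ 2 + y ^ 2))| ≤ C :=
  stmt14_general f hf0 hdecay
end

section
/- Let h : ℝ → [0,∞) be nonnegative with Lipschitz constant at most C on (j, ∞) (i.e. |h'(s)| ≤ C there) and h(s) ≤ C for s > j. Then for x ≥ j + 1/2 and any y ∈ ℝ, | ∫_{s > j, |s−x| < 1} h(s) (s−x)/((s−x)²+y²) ds | ≤ C' for a constant C' depending only on C. -/
/-!
Split `h s = h x + (h s - h x)`. The kernel `(s - x) / ((s - x) ^ 2 + y ^ 2)` has the explicit
primitive `log ((s - x) ^ 2 + y ^ 2) / 2`; the domain is a window `(x - d, x + 1)` with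
`1/2 ≤ d ≤ 1` because `x ≥ j + 1/2`, so the kernel integral lies in `[0, log 2]`, and this handles
the frozen part `h x ≤ C`. For the rest, the
Lipschitz bound `|h s - h x| ≤ C |s - x|` cancels the singularity of the kernel, so the integrand
is bounded by `C` on a window of length at most `2`.
-/

open MeasureTheory Set

lemma setOf_lt_and_abs_sub_lt_eq_Ioo (j x r : ℝ) :
    {s : ℝ | j < s ∧ |s - x| < r} = Ioo (x - min (x - j) r) (x + r) := by
  ext s
  simp only [mem_ofPred_eq, mem_Ioo, abs_lt, sub_lt_comm (a := x), lt_min_iff]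
  grind

lemma abs_mul_div_sq_add_sq_le {u t C : ℝ} (y : ℝ) (hC : 0 ≤ C) (hu : |u| ≤ C * |t|) :
    |u * (t / (t ^ 2 + y ^ 2))| ≤ C := by
  have hker : |t| * |t / (t ^ 2 + y ^ 2)| ≤ 1 := by
    rw [← abs_mul, ← mul_div_assoc, ← pow_two, abs_of_nonneg (by positivity)]
    exact div_le_one_of_le₀ (le_add_of_nonneg_right (sq_nonneg y)) (by positivity)
  calc |u * (t / (t ^ 2 + y ^ 2))| ≤ C * |t| * |t / (t ^ 2 + y ^ 2)| := by
        rw [abs_mul]; gcongr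
    _ ≤ C := by rw [mul_assoc]; exact mul_le_of_le_one_right hC hker

lemma integral_sub_div_sq_add_sq (x : ℝ) {y : ℝ} (hy : y ≠ 0) (a b : ℝ) :
    ∫ s in a..b, (s - x) / ((s - x) ^ 2 + y ^ 2)
      = (Real.log ((b - x) ^ 2 + y ^ 2) - Real.log ((a - x) ^ 2 + y ^ 2)) / 2 := by
  have hpos : ∀ s : ℝ, (s - x) ^ 2 + y ^ 2 ≠ 0 := fun s => by positivity
  have hcont : Continuous fun s : ℝ => (s - x) / ((s - x) ^ 2 + y ^ 2) := by
    fun_prop (disch := exact hpos _)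
  rw [sub_div]
  refine intervalIntegral.integral_eq_sub_of_hasDerivAt
    (f := fun s => Real.log ((s - x) ^ 2 + y ^ 2) / 2) (fun s _ => ?_)
    (hcont.intervalIntegrable _ _)
  have hquad : HasDerivAt (fun s => (s - x) ^ 2 + y ^ 2) (2 * (s - x)) s := by
    simpa using (((hasDerivAt_id s).sub_const x).pow 2).add_const (y ^ 2)
  exact ((hquad.log (hpos s)).div_const 2).congr_deriv (by ring)

lemma abs_integral_Ioo_sub_div_sq_add_sq_le (x y : ℝ) {d r : ℝ} (hd : 0 < d) (hdr : d ≤ r) :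
    |∫ s in Ioo (x - d) (x + r), (s - x) / ((s - x) ^ 2 + y ^ 2)| ≤ Real.log (r / d) := by
  have hlog : 0 ≤ Real.log (r / d) := Real.log_nonneg ((one_le_div hd).2 hdr)
  rw [← integral_Ioc_eq_integral_Ioo, ← intervalIntegral.integral_of_le (by linarith)]
  rcases eq_or_ne y 0 with rfl | hy
  -- For `y = 0` the kernel is `(s - x)⁻¹`, not integrable across `x`, so the integral is `0`.
  · have hinv : (fun s : ℝ => (s - x) / ((s - x) ^ 2 + 0 ^ 2)) = fun s => (s - x)⁻¹ := by
      ext s; rw [zero_pow two_ne_zero, add_zero, pow_two, div_self_mul_self']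
    have hnot : ¬ IntervalIntegrable (fun s : ℝ => (s - x)⁻¹) volume (x - d) (x + r) := by
      rw [intervalIntegrable_sub_inv_iff, uIcc_of_le (by linarith)]
      push Not
      exact ⟨by linarith, by constructor <;> linarith⟩
    rwa [hinv, intervalIntegral.integral_undef hnot, abs_zero]
  · have hsq_pos : ∀ t : ℝ, t ^ 2 + y ^ 2 ≠ 0 := fun t => by positivity
    rw [integral_sub_div_sq_add_sq x hy, add_sub_cancel_left, sub_sub_cancel_left, neg_sq,
      abs_of_nonneg]
    · have hsq : 2 * Real.log (r / d) = Real.log ((r / d) ^ 2) := by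
        rw [Real.log_pow, Nat.cast_ofNat]
      rw [div_le_iff₀ two_pos, ← Real.log_div (hsq_pos r) (hsq_pos d), mul_comm, hsq]
      refine Real.log_le_log (by positivity) ?_
      rw [div_pow, div_le_div_iff₀ (by positivity) (by positivity)]
      nlinarith [mul_le_mul_of_nonneg_right (pow_le_pow_left₀ hd.le hdr 2) (sq_nonneg y)]
    · refine div_nonneg (sub_nonneg.2 (Real.log_le_log (by positivity) ?_)) zero_le_two
      gcongr

lemma abs_setIntegral_mul_le {α : Type*} [MeasurableSpace α] {μ : Measure α} {S : Set α}
    (hSm : MeasurableSet S) (hS : μ S < ⊤) {h k : α → ℝ}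
    (hk : AEStronglyMeasurable k (μ.restrict S)) {c C : ℝ} (hC : 0 ≤ C)
    (hclose : ∀ s ∈ S, |(h s - c) * k s| ≤ C) :
    |∫ s in S, h s * k s ∂μ| ≤ |c| * |∫ s in S, k s ∂μ| + C * μ.real S := by
  by_cases hf : IntegrableOn (fun s => h s * k s) S μ
  · have hg : IntegrableOn (fun s => (h s - c) * k s) S μ := by
      refine .of_bound hS ?_ C (ae_restrict_of_forall_mem hSm hclose)
      refine (hf.aestronglyMeasurable.sub (hk.const_mul c)).congr (.of_forall fun s => ?_)
      simp only [Pi.sub_apply]; ring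
    have hck : IntegrableOn (fun s => c * k s) S μ :=
      (hf.sub hg).congr_fun (fun s _ => by simp only [Pi.sub_apply]; ring) hSm
    have hsplit : ∫ s in S, h s * k s ∂μ
        = c * ∫ s in S, k s ∂μ + ∫ s in S, (h s - c) * k s ∂μ := by
      rw [← integral_const_mul, ← integral_add hck hg]
      exact integral_congr_ae (.of_forall fun s => by ring)
    calc |∫ s in S, h s * k s ∂μ|
        ≤ |c * ∫ s in S, k s ∂μ| + |∫ s in S, (h s - c) * k s ∂μ| :=
          hsplit ▸ abs_add_le _ _
      _ ≤ |c| * |∫ s in S, k s ∂μ| + C * μ.real S := by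
        rw [abs_mul]
        exact add_le_add_right
          (norm_setIntegral_le_of_norm_le_const (f := fun s => (h s - c) * k s) hS hclose) _
  · rw [integral_undef hf, abs_zero]
    positivity

theorem stmt16_general (C : ℝ) :
    ∃ C' : ℝ, ∀ (j x y : ℝ) (h : ℝ → ℝ),
      (∀ s, 0 ≤ h s) →
      (∀ s t : ℝ, j < s → j < t → |h s - h t| ≤ C * |s - t|) →
      (∀ s : ℝ, j < s → h s ≤ C) →
      j + 1 / 2 ≤ x →
      |∫ s in {s : ℝ | j < s ∧ |s - x| < 1},
          h s * ((s - x) / ((s - x) ^ 2 + y ^ 2))| ≤ C' := by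
  refine ⟨3 * C, fun j x y h hpos hlip hbd hx => ?_⟩
  have hjx : j < x := by linarith
  have hC : 0 ≤ C := (hpos x).trans (hbd x hjx)
  rw [setOf_lt_and_abs_sub_lt_eq_Ioo]
  set d := min (x - j) 1
  have hd : 1 / 2 ≤ d := le_min (by linarith) (by norm_num)
  have hd1 : d ≤ 1 := min_le_right _ _
  have hclose : ∀ s ∈ Ioo (x - d) (x + 1),
      |(h s - h x) * ((s - x) / ((s - x) ^ 2 + y ^ 2))| ≤ C := fun s hs =>
    abs_mul_div_sq_add_sq_le y hC (hlip s x (by linarith [hs.1, min_le_left (x - j) 1]) hjx)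
  have hkernel : |∫ s in Ioo (x - d) (x + 1), (s - x) / ((s - x) ^ 2 + y ^ 2)| ≤ 1 := by
    refine (abs_integral_Ioo_sub_div_sq_add_sq_le x y (by linarith) hd1).trans ?_
    refine (Real.log_le_sub_one_of_pos (by positivity)).trans ?_
    rw [sub_le_iff_le_add, div_le_iff₀ (by linarith)]
    linarith
  refine (abs_setIntegral_mul_le measurableSet_Ioo measure_Ioo_lt_top
    (by fun_prop : Measurable fun s : ℝ => (s - x) / ((s - x) ^ 2 + y ^ 2)).aestronglyMeasurable
    hC hclose).trans ?_
  rw [Real.volume_real_Ioo_of_le (by linarith), abs_of_nonneg (hpos x)]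
  nlinarith [hbd x hjx, abs_nonneg (∫ s in Ioo (x - d) (x + 1), (s - x) / ((s - x) ^ 2 + y ^ 2))]

/-- Uniform bound for the near-diagonal integral: if `h ≥ 0` is bounded by `C` and
Lipschitz with constant `C` on `(j, ∞)`, then for `x ≥ j + 1/2` and any `y`,
the integral of `h(s)(s−x)/((s−x)²+y²)` over `{s > j, |s−x| < 1}` is bounded by a
constant `C'` depending only on `C`. -/
theorem stmt16 (C : ℝ) (hC : 0 ≤ C) :
    ∃ C' : ℝ, ∀ (j x y : ℝ) (h : ℝ → ℝ),
      (∀ s, 0 ≤ h s) →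
      (∀ s t : ℝ, j < s → j < t → |h s - h t| ≤ C * |s - t|) →
      (∀ s : ℝ, j < s → h s ≤ C) →
      j + 1 / 2 ≤ x →
      |∫ s in {s : ℝ | j < s ∧ |s - x| < 1},
          h s * ((s - x) / ((s - x) ^ 2 + y ^ 2))| ≤ C' :=
  stmt16_general C
end
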